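/- For every ε > 0 and every x ∈ ℝ³, one has ‖ζ₄^ε(x) − x‖ ≤ (ε/2)‖x‖²; that is, the radial truncation map ζ₄^ε satisfies the calming approximation condition with constant C = 1/2, exponent α = 1 and power β = 2. -/
import Mathlib


/-- The truncation profile `q^ε`. -/
noncomputable def qTrunc (ε r : ℝ) : ℝ :=
  if r < 1 / ε then r
  else if r < 2 / ε then -(ε / 2) * (r - 2 / ε) ^ 2 + 3 / (2 * ε)
  else 3 / (2 * ε)

/-- The radial truncation calming function `ζ₄^ε`; note that for `x = 0` the
formula gives `0` since in Lean division by zero is zero. -/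
noncomputable def zeta4 (ε : ℝ) (x : EuclideanSpace ℝ (Fin 3)) : EuclideanSpace ℝ (Fin 3) :=
  (qTrunc ε ‖x‖ / ‖x‖) • x

lemma qTrunc_approx (ε r : ℝ) (hε : 0 < ε) (hr : 0 ≤ r) :
    |qTrunc ε r - r| ≤ ε / 2 * r ^ 2 := by
  have haε : ε * (1 / ε) = 1 := mul_one_div_cancel hε.ne'
  have ha : 0 < 1 / ε := by positivity
  have e2 : (2 : ℝ) / ε = 2 * (1 / ε) := by ring
  have e3 : (3 : ℝ) / (2 * ε) = (3 / 2) * (1 / ε) := by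
    field_simp
  rw [qTrunc, e2, e3]
  split_ifs with h1 h2
  · simp; positivity
  · push_neg at h1
    rw [abs_le]
    constructor <;> nlinarith [haε, sq_nonneg (r - 1 / ε), mul_nonneg hε.le hr, sq_nonneg r,
      mul_nonneg ha.le (sub_nonneg.mpr h1),
      mul_nonneg (mul_nonneg hε.le ha.le) (by linarith : (0:ℝ) ≤ 2 * r - 1 / ε)]
  · push_neg at h1 h2
    rw [abs_le]
    constructor <;> nlinarith [haε, sq_nonneg (ε * r - 1), sq_nonneg r,
      mul_nonneg hε.le hr, mul_le_mul_of_nonneg_left h2 hε.le]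

theorem zeta4_approx (ε : ℝ) (hε : 0 < ε) (x : EuclideanSpace ℝ (Fin 3)) :
    ‖zeta4 ε x - x‖ ≤ (ε / 2) * ‖x‖ ^ 2 := by
  rcases eq_or_ne x 0 with hx | hx
  · simp [zeta4, hx]
  · have hr : 0 < ‖x‖ := norm_pos_iff.mpr hx
    have hz : zeta4 ε x - x = ((qTrunc ε ‖x‖ - ‖x‖) / ‖x‖) • x := by
      rw [zeta4, sub_div, div_self hr.ne', sub_smul, one_smul]
    rw [hz, norm_smul, Real.norm_eq_abs, abs_div, abs_of_pos hr,
      div_mul_cancel₀ _ hr.ne']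
    exact qTrunc_approx ε ‖x‖ hε hr.le
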